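/- arXiv:1910.02525 — 7 statements merged into one kernel-verified Lean document; each statement's English description precedes it below -/
import Mathlib

section
/- Let Y(a_1,...,a_n) be the n×n matrix over a field F of characteristic ≠ 2 that agrees with the skew tridiagonal matrix Z_n(a_1,...,a_{n-1}) except that its (n,n) entry equals -a_n^2/2. Then det Y(a_1,...,a_n) = ∏_{k odd} a_k^2 if n is even, and det Y(a_1,...,a_n) = -(1/2)·∏_{k odd, k ≤ n} a_k^2 if n is odd. -/
open Finset in
lemma prod_shift {F : Type*} [CommRing F] (n : ℕ) (a : ℕ → F) :
    ∏ k ∈ (Finset.Icc 1 (n+2)).filter (fun k => Odd k), (a k) ^ 2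
      = a 1 ^ 2 * ∏ k ∈ (Finset.Icc 1 n).filter (fun k => Odd k), (a (k+2)) ^ 2 := by
  have h1 : Finset.Icc 1 (n+2) = insert 1 (insert 2 (Finset.Icc 3 (n+2))) := by
    ext x; simp [Finset.mem_Icc]; omega
  have h2 : Finset.Icc 3 (n+2) = Finset.map ⟨fun k => k + 2, add_left_injective 2⟩ (Finset.Icc 1 n) := by
    ext x
    simp only [Finset.mem_Icc, Finset.mem_map, Function.Embedding.coeFn_mk]
    constructor
    · intro h; exact ⟨x - 2, by omega, by omega⟩
    · rintro ⟨y, hy, rfl⟩; omega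
  rw [h1, h2]
  rw [Finset.filter_insert, Finset.filter_insert]
  simp only [Nat.odd_iff, Nat.one_mod, if_true, Nat.reduceMod]
  norm_num
  rw [Finset.prod_insert (by simp [Finset.mem_filter])]
  rw [Finset.filter_map, Finset.prod_map]
  congr 1
  · congr 1
    ext x
    simp [Nat.odd_iff, Nat.add_mod]

/-- Determinant of the modified skew tridiagonal matrix Y(a_1,...,a_n). -/
theorem stmt_1 (F : Type*) [Field F] (h2 : (2 : F) ≠ 0) (n : ℕ) (a : ℕ → F)
    (Y : Matrix (Fin n) (Fin n) F)
    (hY : ∀ i j : Fin n, Y i j =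
      if (i : ℕ) = n - 1 ∧ (j : ℕ) = n - 1 then -(a n) ^ 2 / 2
      else if (j : ℕ) = (i : ℕ) + 1 then a ((i : ℕ) + 1)
      else if (i : ℕ) = (j : ℕ) + 1 then -a ((j : ℕ) + 1) else 0) :
    (Even n → Y.det = ∏ k ∈ Finset.filter (fun k => Odd k) (Finset.Icc 1 n), (a k) ^ 2) ∧
    (Odd n → Y.det = -(1 / 2 : F) * ∏ k ∈ Finset.filter (fun k => Odd k) (Finset.Icc 1 n), (a k) ^ 2) := by
  induction n using Nat.twoStepInduction generalizing a with
  | zero =>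
      constructor
      · intro _
        simp [Matrix.det_isEmpty]
      · intro h; exact absurd h (by decide)
  | one =>
      have hdet : Y.det = -(a 1) ^ 2 / 2 := by
        rw [Matrix.det_fin_one, hY]
        norm_num
      constructor
      · intro h; exact absurd h (by decide)
      · intro _
        rw [hdet]
        have : Finset.filter (fun k => Odd k) (Finset.Icc 1 1) = {1} := by decide
        rw [this, Finset.prod_singleton]
        ring
  | more n ih _ =>
      -- entries of the first row
      have hrow0 : ∀ j : Fin (n+2), j ≠ 1 → Y 0 j = 0 := by
        intro j hj
        rw [hY]
        have hj1 : (j : ℕ) ≠ 1 := fun h => hj (Fin.ext (by simp [h, Fin.val_one]))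
        simp only [Fin.val_zero]
        simp [hj1]
      have hY01 : Y 0 1 = a 1 := by
        rw [hY]
        simp only [Fin.val_zero, Fin.val_one]
        rw [if_neg (by omega)]
        simp
      -- expand along first row
      rw [Matrix.det_succ_row_zero]
      rw [Finset.sum_eq_single (1 : Fin (n+2))
        (fun j _ hj => by rw [hrow0 j hj]; ring)
        (fun h => absurd (Finset.mem_univ _) h)]
      -- expand the minor along the first column
      set M1 := Y.submatrix Fin.succ (1 : Fin (n+2)).succAbove with hM1
      have hcol0 : ∀ i : Fin (n+1), i ≠ 0 → M1 i 0 = 0 := by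
        intro i hi
        have h0 : (1 : Fin (n+2)).succAbove 0 = 0 := by
          rw [Fin.succAbove_of_castSucc_lt]
          · rfl
          · simp [Fin.lt_def]
        rw [hM1]
        simp only [Matrix.submatrix_apply, h0]
        rw [hY]
        have hi1 : (i : ℕ) ≠ 0 := fun h => hi (Fin.ext (by simp [h]))
        simp only [Fin.val_succ, Fin.val_zero]
        simp [hi1]
      have hM100 : M1 0 0 = -a 1 := by
        have h0 : (1 : Fin (n+2)).succAbove 0 = 0 := by
          rw [Fin.succAbove_of_castSucc_lt]
          · rfl
          · simp [Fin.lt_def]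
        rw [hM1]
        simp only [Matrix.submatrix_apply, h0]
        rw [hY]
        simp only [Fin.val_succ, Fin.val_zero]
        rw [if_neg (by omega), if_neg (by omega)]
        simp
      rw [Matrix.det_succ_column_zero]
      rw [Finset.sum_eq_single (0 : Fin (n+1))
        (fun i _ hi => by rw [hcol0 i hi]; ring)
        (fun h => absurd (Finset.mem_univ _) h)]
      rw [hM100, hY01]
      set M2 := M1.submatrix (0 : Fin (n+1)).succAbove Fin.succ with hM2
      -- M2 satisfies the hypothesis for the shifted sequence
      have hY' : ∀ i j : Fin n, M2 i j =
          if (i : ℕ) = n - 1 ∧ (j : ℕ) = n - 1 then -((fun k => a (k+2)) n) ^ 2 / 2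
          else if (j : ℕ) = (i : ℕ) + 1 then (fun k => a (k+2)) ((i : ℕ) + 1)
          else if (i : ℕ) = (j : ℕ) + 1 then -(fun k => a (k+2)) ((j : ℕ) + 1) else 0 := by
        intro i j
        have hi2 : ((Fin.succ ((0 : Fin (n+1)).succAbove i)) : ℕ) = (i : ℕ) + 2 := by
          simp [Fin.succAbove_zero]
        have hj2 : (((1 : Fin (n+2)).succAbove (Fin.succ j)) : ℕ) = (j : ℕ) + 2 := by
          rw [Fin.succAbove_of_le_castSucc]
          · simp
          · simp [Fin.le_def]
        rw [hM2, hM1]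
        simp only [Matrix.submatrix_apply]
        rw [hY]
        simp only [hi2, hj2]
        have hi := i.isLt
        have hj := j.isLt
        split_ifs <;> first | rfl | omega
      obtain ⟨ihe, iho⟩ := ih (fun k => a (k+2)) M2 hY'
      constructor
      · intro hev
        have hev' : Even n := by rcases hev with ⟨m, hm⟩; exact ⟨m - 1, by omega⟩
        simp only [Fin.val_one, Fin.val_zero, pow_one, pow_zero, one_mul]
        rw [ihe hev', prod_shift]
        ring
      · intro hod
        have hod' : Odd n := by rcases hod with ⟨m, hm⟩; exact ⟨m - 1, by omega⟩
        simp only [Fin.val_one, Fin.val_zero, pow_one, pow_zero, one_mul]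
        rw [iho hod', prod_shift]
        ring
end

section
/- With Y = Y(a_1,...,a_n) as above, the (n,n) entry of the adjugate matrix of Y equals ∏_{k odd, k ≤ n-2} a_k^2 if n is odd, and equals 0 if n is even. -/
open Matrix Finset

private def Tm {F : Type*} [Field F] (a : ℕ → F) (m : ℕ) : Matrix (Fin m) (Fin m) F :=
  fun i j => if (j : ℕ) = (i : ℕ) + 1 then a ((i : ℕ) + 1)
    else if (i : ℕ) = (j : ℕ) + 1 then -a ((j : ℕ) + 1) else 0

private lemma key_rec {F : Type*} [Field F] (a : ℕ → F) (m : ℕ) :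
    (Tm a (m + 2)).det = a (m + 1) ^ 2 * (Tm a m).det := by
  set jm : Fin (m + 2) := ⟨m, by omega⟩ with hjm
  have hsa : ∀ j : Fin (m + 1), ((jm.succAbove j : Fin (m+2)) : ℕ) =
      if (j : ℕ) < m then (j : ℕ) else (j : ℕ) + 1 := by
    intro j
    by_cases h : (j : ℕ) < m
    · rw [if_pos h, Fin.succAbove, if_pos (by simpa [Fin.lt_def, hjm] using h)]; rfl
    · rw [if_neg h, Fin.succAbove, if_neg (by simp [Fin.lt_def, hjm]; omega)]; rfl
  rw [Matrix.det_succ_row (Tm a (m + 2)) (Fin.last (m + 1))]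
  rw [Finset.sum_eq_single jm]
  rotate_left
  · intro j _ hj
    have hz : Tm a (m + 2) (Fin.last (m + 1)) j = 0 := by
      simp only [Tm, Fin.val_last]
      rw [if_neg (by omega), if_neg]
      intro h
      exact hj (Fin.ext (by simp [hjm]; omega))
    rw [hz]; ring
  · simp
  have hentry : Tm a (m + 2) (Fin.last (m + 1)) jm = -a (m + 1) := by
    simp only [Tm, Fin.val_last, hjm]
    rw [if_neg (by omega)]; simp
  rw [hentry]
  set M' := (Tm a (m + 2)).submatrix (Fin.last (m + 1)).succAbove jm.succAbove with hM'
  rw [Matrix.det_succ_column M' (Fin.last m)]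
  rw [Finset.sum_eq_single (Fin.last m)]
  rotate_left
  · intro i _ hi
    have hz : M' i (Fin.last m) = 0 := by
      rw [hM', Matrix.submatrix_apply, Fin.succAbove_last]
      have hcol : ((jm.succAbove (Fin.last m) : Fin (m+2)) : ℕ) = m + 1 := by
        rw [hsa]; simp
      have hi' : (i : ℕ) ≠ m := fun h => hi (Fin.ext (by simpa using h))
      have hib := i.is_lt
      simp only [Tm, Fin.coe_castSucc, hcol]
      rw [if_neg (by omega), if_neg (by omega)]
    rw [hz]; ring
  · simp
  have hentry2 : M' (Fin.last m) (Fin.last m) = a (m + 1) := by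
    rw [hM', Matrix.submatrix_apply, Fin.succAbove_last]
    have hcol : ((jm.succAbove (Fin.last m) : Fin (m+2)) : ℕ) = m + 1 := by
      rw [hsa]; simp
    simp only [Tm, Fin.coe_castSucc, hcol, Fin.val_last]
    simp
  rw [hentry2]
  have hsub : M'.submatrix (Fin.last m).succAbove (Fin.last m).succAbove = Tm a m := by
    ext i j
    rw [Fin.succAbove_last, Matrix.submatrix_apply, hM', Matrix.submatrix_apply,
      Fin.succAbove_last]
    have hcol : ((jm.succAbove (Fin.castSucc j) : Fin (m+2)) : ℕ) = (j : ℕ) := by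
      rw [hsa]; simp [Fin.is_lt]
    simp only [Tm, Fin.coe_castSucc, hcol]
  rw [hsub]
  have h1 : ((-1 : F)) ^ ((Fin.last (m+1) : ℕ) + (jm : ℕ)) = (-1) ^ (2 * m + 1) := by
    congr 1
    simp [hjm]; ring
  have h2 : ((-1 : F)) ^ ((Fin.last m : ℕ) + (Fin.last m : ℕ)) = (-1) ^ (2 * m) := by
    congr 1
    simp; ring
  rw [h1, h2, Odd.neg_one_pow ⟨m, by ring⟩, Even.neg_one_pow ⟨m, by ring⟩]
  ring

private lemma detTm {F : Type*} [Field F] (a : ℕ → F) : ∀ m : ℕ, (Tm a m).det =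
    if Even m then ∏ k ∈ Finset.filter (fun k => Odd k) (Finset.Icc 1 (m - 1)), (a k) ^ 2
    else 0 := by
  intro m
  induction m using Nat.strong_induction_on with
  | _ m ih =>
    match m with
    | 0 => simp [Matrix.det_fin_zero]
    | 1 =>
      rw [Matrix.det_fin_one]
      simp [Tm, Nat.not_even_one]
    | (m + 2) =>
      rw [key_rec, ih m (by omega)]
      by_cases hm : Even m
      · have hm2 : Even (m + 2) := by rw [Nat.even_iff] at hm ⊢; omega
        rw [if_pos hm, if_pos hm2]
        have h2 : Finset.filter (fun k => Odd k) (Finset.Icc 1 (m + 1)) =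
            insert (m + 1) (Finset.filter (fun k => Odd k) (Finset.Icc 1 (m - 1))) := by
          ext k
          simp only [Finset.mem_filter, Finset.mem_Icc, Finset.mem_insert]
          constructor
          · rintro ⟨⟨hk1, hk2⟩, hk3⟩
            rcases Nat.lt_or_ge k (m + 1) with h | h
            · right
              have : k ≠ m := by rintro rfl; exact (Nat.not_odd_iff_even.mpr hm) hk3
              exact ⟨⟨hk1, by omega⟩, hk3⟩
            · left; omega
          · rintro (rfl | ⟨⟨hk1, hk2⟩, hk3⟩)
            · exact ⟨⟨by omega, le_refl _⟩, by rw [Nat.odd_iff]; rw [Nat.even_iff] at hm; omega⟩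
            · exact ⟨⟨hk1, by omega⟩, hk3⟩
        show _ = ∏ k ∈ Finset.filter (fun k => Odd k) (Finset.Icc 1 (m + 1)), (a k) ^ 2
        rw [h2, Finset.prod_insert]
        simp only [Finset.mem_filter, Finset.mem_Icc, not_and]
        intro h; omega
      · have hm2 : ¬ Even (m + 2) := by rw [Nat.even_iff] at hm ⊢; omega
        rw [if_neg hm, if_neg hm2, mul_zero]

/-- The (n,n) entry of the adjugate of Y(a_1,...,a_n). -/
theorem stmt_2 (F : Type*) [Field F] (h2 : (2 : F) ≠ 0) (n : ℕ) (hn : 1 ≤ n) (a : ℕ → F)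
    (Y : Matrix (Fin n) (Fin n) F)
    (hY : ∀ i j : Fin n, Y i j =
      if (i : ℕ) = n - 1 ∧ (j : ℕ) = n - 1 then -(a n) ^ 2 / 2
      else if (j : ℕ) = (i : ℕ) + 1 then a ((i : ℕ) + 1)
      else if (i : ℕ) = (j : ℕ) + 1 then -a ((j : ℕ) + 1) else 0) :
    (Odd n → Y.adjugate ⟨n - 1, by omega⟩ ⟨n - 1, by omega⟩ =
      ∏ k ∈ Finset.filter (fun k => Odd k) (Finset.Icc 1 (n - 2)), (a k) ^ 2) ∧
    (Even n → Y.adjugate ⟨n - 1, by omega⟩ ⟨n - 1, by omega⟩ = 0) := by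
  obtain ⟨m, rfl⟩ : ∃ m, n = m + 1 := ⟨n - 1, by omega⟩
  have hlast : (⟨m + 1 - 1, by omega⟩ : Fin (m + 1)) = Fin.last m := rfl
  have hadj : Y.adjugate (Fin.last m) (Fin.last m) = (Tm a m).det := by
    rw [Matrix.adjugate_fin_succ_eq_det_submatrix]
    have hsub : Y.submatrix (Fin.last m).succAbove (Fin.last m).succAbove = Tm a m := by
      ext i j
      rw [Fin.succAbove_last, Matrix.submatrix_apply, hY]
      have hij : ¬(((i.castSucc : Fin (m + 1)) : ℕ) = m + 1 - 1 ∧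
          ((j.castSucc : Fin (m + 1)) : ℕ) = m + 1 - 1) := by
        simp only [Fin.coe_castSucc]
        intro ⟨h, _⟩
        have := i.is_lt; omega
      rw [if_neg hij]
      rfl
    rw [hsub]
    have hpow : (-1 : F) ^ ((Fin.last m : ℕ) + (Fin.last m : ℕ)) = 1 := by
      rw [Fin.val_last, ← two_mul]; exact Even.neg_one_pow (even_two_mul m)
    rw [hpow, one_mul]
  rw [hlast, hadj, detTm]
  constructor
  · intro hodd
    have hm : Even m := by rw [Nat.odd_iff] at hodd; rw [Nat.even_iff]; omega
    rw [if_pos hm]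
    rfl
  · intro heven
    have hm : ¬ Even m := by rw [Nat.even_iff] at heven ⊢; omega
    rw [if_neg hm]
end

section
/- Let n be odd, let a_1,...,a_n be nonzero elements of a field F of characteristic ≠ 2, let Y = Y(a_1,...,a_n), and let α ∈ F^n be the column vector (0,...,0,a_n)^t. Then Y is invertible and α^t · Y^{-1} · α = -2. -/
open Matrix Kronecker

private lemma sum_pair {ι β : Type*} [Fintype ι] [DecidableEq ι] [AddCommMonoid β]
    {f : ι → β} {i j : ι} (hij : i ≠ j)
    (h : ∀ k, k ≠ i → k ≠ j → f k = 0) : ∑ k, f k = f i + f j := by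
  rw [← Finset.sum_erase_add Finset.univ f (Finset.mem_univ j)]
  congr 1
  exact Finset.sum_eq_single_of_mem i (Finset.mem_erase.2 ⟨hij, Finset.mem_univ i⟩)
    (fun k hk hki => h k hki (Finset.ne_of_mem_erase hk))

section
variable {F : Type*} [Field F] {n : ℕ} {a : ℕ → F} {Y : Matrix (Fin n) (Fin n) F}

private lemma hrow
    (hY : ∀ i j : Fin n, Y i j =
      if (i : ℕ) = n - 1 ∧ (j : ℕ) = n - 1 then -(a n) ^ 2 / 2
      else if (j : ℕ) = (i : ℕ) + 1 then a ((i : ℕ) + 1)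
      else if (i : ℕ) = (j : ℕ) + 1 then -a ((j : ℕ) + 1) else 0)
    (hn : Odd n) (v : Fin n → F) (i : Fin n) :
    (Y *ᵥ v) i =
      (if h : (i : ℕ) + 1 < n then a ((i : ℕ) + 1) * v ⟨(i : ℕ) + 1, h⟩
        else -(a n) ^ 2 / 2 * v i)
      + (if 0 < (i : ℕ) then
          -a (i : ℕ) * v ⟨(i : ℕ) - 1, Nat.lt_of_le_of_lt (Nat.sub_le _ _) i.isLt⟩ else 0) := by
  have hi := i.isLt
  have hn1 : n % 2 = 1 := Nat.odd_iff.mp hn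
  have hY1 : ∀ j : Fin n, (j : ℕ) = (i : ℕ) + 1 → Y i j = a ((i : ℕ) + 1) := by
    intro j hj
    have hj2 := j.isLt
    rw [hY]
    split_ifs with c1 c2 <;> first | rfl | (exfalso; omega)
  have hY2 : ∀ j : Fin n, (i : ℕ) = (j : ℕ) + 1 → Y i j = -a ((j : ℕ) + 1) := by
    intro j hj
    have hj2 := j.isLt
    rw [hY]
    split_ifs with c1 c2 <;> first | rfl | (exfalso; omega)
  have hY3 : ∀ j : Fin n, (i : ℕ) = n - 1 → (j : ℕ) = n - 1 → Y i j = -(a n) ^ 2 / 2 := by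
    intro j h1 h2
    rw [hY]
    split_ifs with c1 <;> first | rfl | (exfalso; omega)
  have hY0 : ∀ j : Fin n, (j : ℕ) ≠ (i : ℕ) + 1 → (i : ℕ) ≠ (j : ℕ) + 1 →
      ¬((i : ℕ) = n - 1 ∧ (j : ℕ) = n - 1) → Y i j = 0 := by
    intro j h1 h2 h3
    rw [hY]
    split_ifs with c1 c2 c3 <;> first | rfl | (exfalso; omega)
  simp only [mulVec, dotProduct]
  by_cases h1 : (i : ℕ) + 1 < n <;> by_cases h0 : 0 < (i : ℕ)
  · rw [dif_pos h1, if_pos h0]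
    rw [sum_pair (i := (⟨(i : ℕ) + 1, h1⟩ : Fin n))
        (j := (⟨(i : ℕ) - 1, Nat.lt_of_le_of_lt (Nat.sub_le _ _) i.isLt⟩ : Fin n))
        (by intro h; have := congrArg Fin.val h; simp at this; omega)
        (by
          intro k hk1 hk2
          have e1 : (k : ℕ) ≠ (i : ℕ) + 1 := fun h => hk1 (Fin.ext h)
          have e2 : (k : ℕ) ≠ (i : ℕ) - 1 := fun h => hk2 (Fin.ext h)
          rw [hY0 k e1 (by omega) (by omega), zero_mul])]
    rw [hY1 ⟨(i : ℕ) + 1, h1⟩ rfl, hY2 ⟨(i : ℕ) - 1, _⟩ (by simp; omega)]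
    have e : (i : ℕ) - 1 + 1 = (i : ℕ) := by omega
    simp only [e]
  · -- i = 0, n > 1
    rw [dif_pos h1, if_neg h0]
    rw [Finset.sum_eq_single_of_mem (⟨(i : ℕ) + 1, h1⟩ : Fin n) (Finset.mem_univ _)
        (by
          intro k _ hk
          have e1 : (k : ℕ) ≠ (i : ℕ) + 1 := fun h => hk (Fin.ext h)
          rw [hY0 k e1 (by omega) (by omega), zero_mul])]
    rw [hY1 ⟨(i : ℕ) + 1, h1⟩ rfl, add_zero]
  · -- i = n - 1 > 0
    rw [dif_neg h1, if_pos h0]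
    rw [sum_pair (i := i)
        (j := (⟨(i : ℕ) - 1, Nat.lt_of_le_of_lt (Nat.sub_le _ _) i.isLt⟩ : Fin n))
        (by intro h; have := congrArg Fin.val h; simp at this; omega)
        (by
          intro k hk1 hk2
          have e1 : (k : ℕ) ≠ (i : ℕ) := fun h => hk1 (Fin.ext h)
          have e2 : (k : ℕ) ≠ (i : ℕ) - 1 := fun h => hk2 (Fin.ext h)
          rw [hY0 k (by omega) (by omega) (by omega), zero_mul])]
    rw [hY3 i (by omega) (by omega), hY2 ⟨(i : ℕ) - 1, _⟩ (by simp; omega)]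
    have e : (i : ℕ) - 1 + 1 = (i : ℕ) := by omega
    simp only [e]
  · -- n = 1
    rw [dif_neg h1, if_neg h0]
    rw [Finset.sum_eq_single_of_mem i (Finset.mem_univ _)
        (by
          intro k _ hk
          have hk2 := k.isLt
          have e1 : (k : ℕ) ≠ (i : ℕ) := fun h => hk (Fin.ext h)
          rw [hY0 k (by omega) (by omega) (by omega), zero_mul])]
    rw [hY3 i (by omega) (by omega), add_zero]

end

/-- auxiliary recursive sequence -/
def bAux {F : Type*} [Field F] (a : ℕ → F) (n : ℕ) : ℕ → F
  | 0 => -2 / a n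
  | m+1 => (a (n - 2*m - 1) / a (n - 2*m - 2)) * bAux a n m

/-- For n odd, Y is invertible and αᵗ Y⁻¹ α = -2. -/
theorem stmt_3 (F : Type*) [Field F] (h2 : (2 : F) ≠ 0) (n : ℕ) (hn : Odd n) (a : ℕ → F)
    (ha : ∀ k, 1 ≤ k → k ≤ n → a k ≠ 0)
    (Y : Matrix (Fin n) (Fin n) F)
    (hY : ∀ i j : Fin n, Y i j =
      if (i : ℕ) = n - 1 ∧ (j : ℕ) = n - 1 then -(a n) ^ 2 / 2
      else if (j : ℕ) = (i : ℕ) + 1 then a ((i : ℕ) + 1)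
      else if (i : ℕ) = (j : ℕ) + 1 then -a ((j : ℕ) + 1) else 0)
    (α : Fin n → F)
    (hα : ∀ i : Fin n, α i = if (i : ℕ) = n - 1 then a n else 0) :
    IsUnit Y.det ∧ α ⬝ᵥ (Y⁻¹ *ᵥ α) = -2 := by
  have hn1 : n % 2 = 1 := Nat.odd_iff.mp hn
  have hrw := hrow hY hn
  -- injectivity
  have hinj : Function.Injective Y.mulVec := by
    rw [← Matrix.coe_mulVecLin, ← LinearMap.ker_eq_bot, LinearMap.ker_eq_bot']
    intro v hv
    set w : ℕ → F := fun k => if h : k < n then v ⟨k, h⟩ else 0 with hwdef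
    have hveq : ∀ k (h : k < n), (Y *ᵥ v) ⟨k, h⟩ = 0 := by
      intro k h
      have := congrFun hv ⟨k, h⟩
      simpa using this
    -- odd indices are zero
    have Podd : ∀ k, k % 2 = 1 → w k = 0 := by
      intro k
      induction k using Nat.strong_induction_on with
      | _ k ih =>
        intro hk1
        by_cases hkn : k < n
        · have hrow' := hrw v ⟨k - 1, by omega⟩
          rw [hveq (k - 1) (by omega)] at hrow'
          simp only at hrow'
          rw [dif_pos (show k - 1 + 1 < n by omega)] at hrow'
          have e1 : k - 1 + 1 = k := by omega
          replace hrow' := hrow'.symm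
          by_cases hk1' : k = 1
          · rw [if_neg (by omega), add_zero] at hrow'
            rw [hwdef]
            simp only [dif_pos hkn]
            have hv1 : v ⟨k, hkn⟩ = v ⟨k - 1 + 1, by omega⟩ := by congr 1; exact Fin.ext (by simp; omega)
            rw [hv1]
            have hae := ha (k - 1 + 1) (by omega) (by omega)
            exact (mul_eq_zero.mp hrow').resolve_left hae
          · rw [if_pos (show 0 < k - 1 by omega)] at hrow'
            have hw2 : w (k - 2) = 0 := ih (k - 2) (by omega) (by omega)
            have hv2 : v ⟨k - 1 - 1, by omega⟩ = 0 := by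
              rw [hwdef] at hw2; simp only [dif_pos (show k - 2 < n by omega)] at hw2
              exact hw2
            simp only [hv2, mul_zero, neg_zero, add_zero] at hrow'
            rw [hwdef]; simp only [dif_pos hkn]
            have hv1 : v ⟨k, hkn⟩ = v ⟨k - 1 + 1, by omega⟩ := by congr 1; exact Fin.ext (by simp; omega)
            rw [hv1]
            have hae := ha (k - 1 + 1) (by omega) (by omega)
            exact (mul_eq_zero.mp hrow').resolve_left hae
        · rw [hwdef]; simp [hkn]
    -- top even index is zero
    have Ptop : w (n - 1) = 0 := by
      have hrow' := hrw v ⟨n - 1, by omega⟩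
      rw [hveq (n - 1) (by omega)] at hrow'
      simp only at hrow'
      rw [dif_neg (by omega)] at hrow'
      have hsec : (if 0 < n - 1 then
          -a (n - 1) * v ⟨n - 1 - 1, Nat.lt_of_le_of_lt (Nat.sub_le _ _) (by omega)⟩ else 0) = 0 := by
        by_cases hn2 : 0 < n - 1
        · rw [if_pos hn2]
          have hw2 : w (n - 2) = 0 := Podd (n - 2) (by omega)
          have hv3 : v ⟨n - 1 - 1, by omega⟩ = 0 := by
            rw [hwdef] at hw2; simp only [dif_pos (show n - 2 < n by omega)] at hw2
            exact hw2
          rw [hv3, mul_zero]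
        · rw [if_neg hn2]
      rw [hsec, add_zero] at hrow'
      replace hrow' := hrow'.symm
      rw [hwdef]; simp only [dif_pos (show n - 1 < n by omega)]
      have hae := ha n (by omega) le_rfl
      have : (-(a n) ^ 2 / 2) ≠ 0 := by
        field_simp
        exact neg_ne_zero.mpr (div_ne_zero (pow_ne_zero 2 hae) h2)
      exact (mul_eq_zero.mp hrow').resolve_left this
    -- even indices are zero, downward induction on n-1-k
    have Pev : ∀ j k, k % 2 = 0 → k < n → n - 1 - k = j → w k = 0 := by
      intro j
      induction j using Nat.strong_induction_on with
      | _ j ih =>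
        intro k hk0 hkn hj
        by_cases hke : k = n - 1
        · rw [hke]; exact Ptop
        · have hk2 : k + 2 < n := by omega
          have hrow' := hrw v ⟨k + 1, by omega⟩
          rw [hveq (k + 1) (by omega)] at hrow'
          simp only at hrow'
          rw [dif_pos (show k + 1 + 1 < n by omega), if_pos (by omega : 0 < k + 1)] at hrow'
          have hw2 : w (k + 2) = 0 := ih (j - 2) (by omega) (k + 2) (by omega) (by omega) (by omega)
          have hv2 : v ⟨k + 1 + 1, by omega⟩ = 0 := by
            rw [hwdef] at hw2; simp only [dif_pos (show k + 2 < n by omega)] at hw2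
            exact hw2
          rw [hv2, mul_zero, zero_add] at hrow'
          replace hrow' := hrow'.symm
          rw [hwdef]; simp only [dif_pos hkn]
          have hv1 : v ⟨k, hkn⟩ = v ⟨k + 1 - 1, by omega⟩ := rfl
          rw [hv1]
          have hae := ha (k + 1) (by omega) (by omega)
          exact (mul_eq_zero.mp hrow').resolve_left (neg_ne_zero.mpr hae)
    funext i
    have : v i = w (i : ℕ) := by rw [hwdef]; simp [i.isLt]
    rw [this]
    rcases Nat.even_or_odd (i : ℕ) with he | ho
    · exact Pev (n - 1 - (i : ℕ)) (i : ℕ) (Nat.even_iff.mp he) i.isLt rfl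
    · exact Podd (i : ℕ) (Nat.odd_iff.mp ho)
  have hUnit : IsUnit Y := Matrix.mulVec_injective_iff_isUnit.mp hinj
  have hdet : IsUnit Y.det := (Matrix.isUnit_iff_isUnit_det Y).mp hUnit
  refine ⟨hdet, ?_⟩
  -- explicit solution
  set x : Fin n → F := fun i => if (i : ℕ) % 2 = 0 then bAux a n ((n - 1 - (i : ℕ)) / 2) else 0
    with hxdef
  have hxval : ∀ (k : ℕ) (h : k < n),
      x ⟨k, h⟩ = if k % 2 = 0 then bAux a n ((n - 1 - k) / 2) else 0 := fun k h => rfl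
  have hx : Y *ᵥ x = α := by
    funext i
    rw [hrw x i, hα]
    have hi := i.isLt
    rcases Nat.even_or_odd (i : ℕ) with he | ho
    · have he' : (i : ℕ) % 2 = 0 := Nat.even_iff.mp he
      have hsec : (if 0 < (i : ℕ) then
          -a (i : ℕ) * x ⟨(i : ℕ) - 1, Nat.lt_of_le_of_lt (Nat.sub_le _ _) i.isLt⟩ else 0) = 0 := by
        by_cases h0 : 0 < (i : ℕ)
        · rw [if_pos h0, hxval _ _, if_neg (show ¬(((i : ℕ) - 1) % 2 = 0) by omega), mul_zero]
        · rw [if_neg h0]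
      by_cases hie : (i : ℕ) = n - 1
      · rw [if_pos hie, dif_neg (show ¬((i : ℕ) + 1 < n) by omega), hsec, add_zero]
        have hx1 : x i = -2 / a n := by
          have : x i = x ⟨(i : ℕ), hi⟩ := by congr 1
          rw [this, hxval _ _, if_pos he']
          have e : (n - 1 - (i : ℕ)) / 2 = 0 := by omega
          rw [e, bAux]
        rw [hx1]
        have hae := ha n (by omega) le_rfl
        field_simp
      · rw [if_neg hie, dif_pos (show (i : ℕ) + 1 < n by omega), hsec, add_zero]
        rw [hxval _ _, if_neg (show ¬(((i : ℕ) + 1) % 2 = 0) by omega), mul_zero]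
    · have ho' : (i : ℕ) % 2 = 1 := Nat.odd_iff.mp ho
      rw [if_neg (show ¬((i : ℕ) = n - 1) by omega),
        dif_pos (show (i : ℕ) + 1 < n by omega), if_pos (show 0 < (i : ℕ) by omega)]
      set m : ℕ := (n - 2 - (i : ℕ)) / 2 with hmdef
      have hx1 : x ⟨(i : ℕ) + 1, by omega⟩ = bAux a n m := by
        rw [hxval _ _, if_pos (show ((i : ℕ) + 1) % 2 = 0 by omega)]
        congr 1
        omega
      have hx2 : x ⟨(i : ℕ) - 1, Nat.lt_of_le_of_lt (Nat.sub_le _ _) i.isLt⟩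
          = bAux a n (m + 1) := by
        rw [hxval _ _, if_pos (show ((i : ℕ) - 1) % 2 = 0 by omega)]
        congr 1
        omega
      rw [hx1, hx2, bAux]
      have e1 : n - 2 * m - 1 = (i : ℕ) + 1 := by omega
      have e2 : n - 2 * m - 2 = (i : ℕ) := by omega
      rw [e1, e2]
      have hae := ha (i : ℕ) (by omega) (by omega)
      field_simp
      ring
  have hxinv : Y⁻¹ *ᵥ α = x := by
    rw [← hx, Matrix.mulVec_mulVec, Matrix.nonsing_inv_mul Y hdet, Matrix.one_mulVec]
  rw [hxinv]
  -- compute the dot product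
  rw [dotProduct]
  rw [Finset.sum_eq_single_of_mem (⟨n - 1, by omega⟩ : Fin n) (Finset.mem_univ _)
      (by
        intro k _ hk
        have : (k : ℕ) ≠ n - 1 := fun h => hk (Fin.ext (by simp [h]))
        rw [hα k, if_neg this, zero_mul])]
  rw [hα, if_pos (by simp)]
  have hx1 : x ⟨n - 1, by omega⟩ = -2 / a n := by
    rw [hxval _ _, if_pos (show (n - 1) % 2 = 0 by omega)]
    have e : (n - 1 - (n - 1)) / 2 = 0 := by omega
    rw [e, bAux]
  rw [hx1]
  have hae := ha n (by omega) le_rfl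
  field_simp
end

section
/- Let n be even, let a_1,...,a_n be nonzero elements of a field F of characteristic ≠ 2, let Y = Y(a_1,...,a_n), and let α = (0,...,0,a_n)^t. Then Y is invertible and α^t · Y^{-1} · α = 0. -/
open Matrix Kronecker

/-- For n even, Y is invertible and αᵗ Y⁻¹ α = 0. -/
theorem stmt_4 (F : Type*) [Field F] (h2 : (2 : F) ≠ 0) (n : ℕ) (hn : Even n) (a : ℕ → F)
    (ha : ∀ k, 1 ≤ k → k ≤ n → a k ≠ 0)
    (Y : Matrix (Fin n) (Fin n) F)
    (hY : ∀ i j : Fin n, Y i j =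
      if (i : ℕ) = n - 1 ∧ (j : ℕ) = n - 1 then -(a n) ^ 2 / 2
      else if (j : ℕ) = (i : ℕ) + 1 then a ((i : ℕ) + 1)
      else if (i : ℕ) = (j : ℕ) + 1 then -a ((j : ℕ) + 1) else 0)
    (α : Fin n → F)
    (hα : ∀ i : Fin n, α i = if (i : ℕ) = n - 1 then a n else 0) :
    IsUnit Y.det ∧ α ⬝ᵥ (Y⁻¹ *ᵥ α) = 0 := by
  rcases Nat.eq_zero_or_pos n with h0 | hpos
  · subst h0
    constructor
    · simp [Matrix.det_fin_zero]
    · simp [dotProduct]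
  have hn2 : 2 ≤ n := by rcases hn with ⟨m, hm⟩; omega
  -- sum of an indicator over Fin n
  have hsum : ∀ (c : ℕ) (hc : c < n) (f : Fin n → F),
      (∑ j : Fin n, if (j : ℕ) = c then f j else 0) = f ⟨c, hc⟩ := by
    intro c hc f
    have h : ∀ j : Fin n, (if (j : ℕ) = c then f j else 0)
        = (if j = ⟨c, hc⟩ then f j else 0) := by
      intro j; simp [Fin.ext_iff]
    simp_rw [h]
    simp
  -- row 0
  have key0 : ∀ v : Fin n → F, (Y *ᵥ v) ⟨0, by omega⟩ = a 1 * v ⟨1, by omega⟩ := by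
    intro v
    have h : ∀ j : Fin n, Y ⟨0, by omega⟩ j * v j
        = (if (j : ℕ) = 1 then a 1 * v j else 0) := by
      intro j
      rw [hY]
      simp only [Fin.val_mk]
      split_ifs <;> first | (exfalso; omega) | ring1 | (simp_all; try ring1)
    simp only [Matrix.mulVec, dotProduct]
    rw [Finset.sum_congr rfl (fun j _ => h j), hsum 1 (by omega)]
  -- middle rows
  have keyS : ∀ (v : Fin n → F) (k : ℕ) (hk : k + 2 < n),
      (Y *ᵥ v) ⟨k + 1, by omega⟩
        = a (k + 2) * v ⟨k + 2, by omega⟩ - a (k + 1) * v ⟨k, by omega⟩ := by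
    intro v k hk
    have h : ∀ j : Fin n, Y ⟨k + 1, by omega⟩ j * v j
        = (if (j : ℕ) = k + 2 then a (k + 2) * v j else 0)
          + (if (j : ℕ) = k then -a (k + 1) * v j else 0) := by
      intro j
      rw [hY]
      simp only [Fin.val_mk]
      split_ifs <;> first | (exfalso; omega) | ring1 | (simp_all; try ring1)
    simp only [Matrix.mulVec, dotProduct]
    rw [Finset.sum_congr rfl (fun j _ => h j), Finset.sum_add_distrib,
      hsum (k + 2) (by omega), hsum k (by omega)]
    ring
  -- last row
  have keyLast : ∀ v : Fin n → F, (Y *ᵥ v) ⟨n - 1, by omega⟩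
      = -(a n) ^ 2 / 2 * v ⟨n - 1, by omega⟩ - a (n - 1) * v ⟨n - 2, by omega⟩ := by
    intro v
    have h : ∀ j : Fin n, Y ⟨n - 1, by omega⟩ j * v j
        = (if (j : ℕ) = n - 1 then -(a n) ^ 2 / 2 * v j else 0)
          + (if (j : ℕ) = n - 2 then -a (n - 2 + 1) * v j else 0) := by
      intro j
      rw [hY]
      simp only [Fin.val_mk, eq_self_iff_true, true_and]
      have hjn : (j : ℕ) < n := j.isLt
      split_ifs <;> first | (exfalso; omega) | ring1 | (simp_all; try ring1)
    simp only [Matrix.mulVec, dotProduct]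
    rw [Finset.sum_congr rfl (fun j _ => h j), Finset.sum_add_distrib,
      hsum (n - 1) (by omega), hsum (n - 2) (by omega)]
    have : n - 2 + 1 = n - 1 := by omega
    rw [this]
    ring
  -- odd entries of any vector killed on rows 0..n-2 vanish
  have odd_zero : ∀ (w : Fin n → F), (∀ i : Fin n, (i : ℕ) + 1 < n → (Y *ᵥ w) i = 0) →
      ∀ k (hk : k < n), Odd k → w ⟨k, hk⟩ = 0 := by
    intro w hw k
    induction k using Nat.strong_induction_on with
    | _ k ih =>
      intro hk hodd
      rcases hodd with ⟨m, hm⟩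
      rcases Nat.eq_zero_or_pos m with hm0 | hmpos
      · have hk1 : k = 1 := by omega
        subst hk1
        have h := hw ⟨0, by omega⟩ (by simpa using by omega)
        rw [key0 w] at h
        have ha1 := ha 1 le_rfl (by omega)
        have := mul_eq_zero.mp h
        tauto
      · obtain ⟨j, rfl⟩ : ∃ j, k = j + 2 := ⟨k - 2, by omega⟩
        have h := hw ⟨j + 1, by omega⟩ (by simpa using by omega)
        rw [keyS w j (by omega)] at h
        have hj0 : w ⟨j, by omega⟩ = 0 := ih j (by omega) (by omega) ⟨m - 1, by omega⟩
        rw [hj0] at h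
        have haj : a (j + 2) ≠ 0 := ha (j + 2) (by omega) (by omega)
        rw [mul_zero, sub_zero] at h
        rcases mul_eq_zero.mp h with h'' | h''
        · exact absurd h'' haj
        · exact h''
  have hoddn1 : Odd (n - 1) := by rcases hn with ⟨q, hq⟩; exact ⟨q - 1, by omega⟩
  -- determinant nonzero
  have hdet : Y.det ≠ 0 := by
    intro hd
    obtain ⟨v, hv0, hv⟩ := (Matrix.exists_mulVec_eq_zero_iff).2 hd
    have hrows : ∀ i : Fin n, (i : ℕ) + 1 < n → (Y *ᵥ v) i = 0 := by
      intro i _; rw [hv]; rfl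
    have hodd : ∀ k (hk : k < n), Odd k → v ⟨k, hk⟩ = 0 := odd_zero v hrows
    -- v (n-2) = 0 from last row
    have hlast : (Y *ᵥ v) ⟨n - 1, by omega⟩ = 0 := by rw [hv]; rfl
    rw [keyLast v, hodd (n - 1) (by omega) hoddn1, mul_zero, zero_sub,
      neg_eq_zero] at hlast
    have hv2 : v ⟨n - 2, by omega⟩ = 0 := by
      have han1 : a (n - 1) ≠ 0 := ha (n - 1) (by omega) (by omega)
      rcases mul_eq_zero.mp hlast with h'' | h''
      · exact absurd h'' han1
      · exact h''
    -- even entries vanish, descending induction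
    have heven : ∀ m k (hk : k < n), Even k → n - 2 - k = m → v ⟨k, hk⟩ = 0 := by
      intro m
      induction m using Nat.strong_induction_on with
      | _ m ih =>
        intro k hk hke hm
        obtain ⟨p, hp⟩ := hke
        obtain ⟨q, hq⟩ := hn
        by_cases hkn : k = n - 2
        · subst hkn; exact hv2
        · have hk2 : k + 2 < n := by omega
          have h := keyS v k hk2
          rw [hv] at h
          simp only [Pi.zero_apply] at h
          have hk2z : v ⟨k + 2, by omega⟩ = 0 :=
            ih (n - 2 - (k + 2)) (by omega) (k + 2) (by omega) ⟨p + 1, by omega⟩ rfl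
          rw [hk2z, mul_zero, zero_sub] at h
          have hak : a (k + 1) ≠ 0 := ha (k + 1) (by omega) (by omega)
          have h' : a (k + 1) * v ⟨k, hk⟩ = 0 := neg_eq_zero.mp h.symm
          rcases mul_eq_zero.mp h' with h'' | h''
          · exact absurd h'' hak
          · exact h''
    have : v = 0 := by
      funext i
      rcases Nat.even_or_odd (i : ℕ) with he | ho
      · have := heven (n - 2 - (i : ℕ)) (i : ℕ) i.isLt he rfl
        simpa using this
      · have := hodd (i : ℕ) i.isLt ho
        simpa using this
    exact hv0 this
  have hdu : IsUnit Y.det := isUnit_iff_ne_zero.2 hdet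
  refine ⟨hdu, ?_⟩
  set w := Y⁻¹ *ᵥ α with hwdef
  have hYw : Y *ᵥ w = α := by
    rw [hwdef, Matrix.mulVec_mulVec, Matrix.mul_nonsing_inv _ hdu, Matrix.one_mulVec]
  have hrows : ∀ i : Fin n, (i : ℕ) + 1 < n → (Y *ᵥ w) i = 0 := by
    intro i hi
    rw [hYw, hα, if_neg]
    omega
  have hw1 : w ⟨n - 1, by omega⟩ = 0 := odd_zero w hrows (n - 1) (by omega) hoddn1
  have hdot : ∀ i : Fin n, α i * w i = (if (i : ℕ) = n - 1 then a n * w i else 0) := by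
    intro i
    rw [hα]
    split_ifs <;> ring
  simp only [dotProduct]
  rw [Finset.sum_congr rfl (fun i _ => hdot i), hsum (n - 1) (by omega), hw1, mul_zero]
end

section
/- Let a_1,...,a_n be nonzero elements of a field F of characteristic ≠ 2, Y = Y(a_1,...,a_n) and α = (0,...,0,a_n)^t. If n is odd, then Y^{-1}α = (Y^t)^{-1}α; if n is even, then Y^{-1}α = -(Y^t)^{-1}α. -/
open Matrix Kronecker

/-- Relation between Y⁻¹α and (Yᵀ)⁻¹α according to the parity of n. -/
theorem stmt_5 (F : Type*) [Field F] (h2 : (2 : F) ≠ 0) (n : ℕ) (a : ℕ → F)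
    (ha : ∀ k, 1 ≤ k → k ≤ n → a k ≠ 0)
    (Y : Matrix (Fin n) (Fin n) F)
    (hY : ∀ i j : Fin n, Y i j =
      if (i : ℕ) = n - 1 ∧ (j : ℕ) = n - 1 then -(a n) ^ 2 / 2
      else if (j : ℕ) = (i : ℕ) + 1 then a ((i : ℕ) + 1)
      else if (i : ℕ) = (j : ℕ) + 1 then -a ((j : ℕ) + 1) else 0)
    (α : Fin n → F)
    (hα : ∀ i : Fin n, α i = if (i : ℕ) = n - 1 then a n else 0) :
    (Odd n → Y⁻¹ *ᵥ α = (Yᵀ)⁻¹ *ᵥ α) ∧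
    (Even n → Y⁻¹ *ᵥ α = -((Yᵀ)⁻¹ *ᵥ α)) := by
  rcases Nat.eq_zero_or_pos n with hn0 | hn0
  · subst hn0
    refine ⟨fun _ => ?_, fun _ => ?_⟩ <;> (funext i; exact absurd i.2 (by omega))
  by_cases hdet : IsUnit Y.det
  · set x := Y⁻¹ *ᵥ α with hx
    have hYx : Y *ᵥ x = α := by
      rw [hx, Matrix.mulVec_mulVec, Matrix.mul_nonsing_inv Y hdet, Matrix.one_mulVec]
    -- the solution vanishes at odd indices
    have key : ∀ k, Odd k → ∀ hk : k < n, x ⟨k, hk⟩ = 0 := by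
      intro k
      induction k using Nat.strong_induction_on with
      | _ k IH =>
        intro hodd hk
        obtain ⟨m, hm⟩ := hodd
        have hk1 : 1 ≤ k := by omega
        set r : Fin n := ⟨k - 1, by omega⟩ with hr
        have hrow : (Y *ᵥ x) r = 0 := by
          rw [hYx, hα]
          have : ¬ ((r : ℕ) = n - 1) := by simp only [hr]; omega
          rw [if_neg this]
        have hsum : (Y *ᵥ x) r = a k * x ⟨k, hk⟩ := by
          have hdef : (Y *ᵥ x) r = ∑ j, Y r j * x j := rfl
          rw [hdef, Finset.sum_eq_single (⟨k, hk⟩ : Fin n)]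
          · rw [hY]
            have hc : ¬ ((r : ℕ) = n - 1 ∧ ((⟨k, hk⟩ : Fin n) : ℕ) = n - 1) := by
              simp only [hr]; omega
            have hs : ((⟨k, hk⟩ : Fin n) : ℕ) = (r : ℕ) + 1 := by
              simp only [hr]; omega
            rw [if_neg hc, if_pos hs]
            congr 2
            simp only [hr]; omega
          · intro j _ hj
            have hjk : (j : ℕ) ≠ k := fun h => hj (Fin.ext h)
            rw [hY]
            split_ifs with h1 h2 h3
            · exfalso; simp only [hr] at h1; omega
            · exfalso; simp only [hr] at h2; omega
            · -- j = k - 2, use induction hypothesis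
              have hj2 : (j : ℕ) = k - 2 := by simp only [hr] at h3; omega
              have hk3 : 3 ≤ k := by simp only [hr] at h3; omega
              have hxj : x j = 0 := by
                have heq : j = ⟨k - 2, by omega⟩ := Fin.ext (by simpa using hj2)
                rw [heq]
                exact IH (k - 2) (by omega) ⟨m - 1, by omega⟩ (by omega)
              rw [hxj, mul_zero]
            · rw [zero_mul]
          · intro h; exact absurd (Finset.mem_univ _) h
        have : a k * x ⟨k, hk⟩ = 0 := by rw [← hsum, hrow]
        rcases mul_eq_zero.mp this with h | h
        · exact absurd h (ha k hk1 (le_of_lt hk))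
        · exact h
    -- the sign-flip diagonal matrix
    set D : Matrix (Fin n) (Fin n) F := Matrix.diagonal (fun i => (-1 : F) ^ (i : ℕ)) with hD
    have hsq : ∀ m : ℕ, (-1 : F) ^ m * (-1 : F) ^ m = 1 := by
      intro m; rw [← pow_add]; exact Even.neg_one_pow ⟨m, rfl⟩
    have flip : ∀ (m : ℕ) (c : F), (-1 : F) ^ m * c * (-1 : F) ^ m = c := by
      intro m c; rw [mul_right_comm, hsq, one_mul]
    have hDD : D * D = 1 := by
      rw [hD, Matrix.diagonal_mul_diagonal]
      have he : (fun i : Fin n => (-1 : F) ^ (i : ℕ) * (-1 : F) ^ (i : ℕ))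
          = fun _ => (1 : F) := funext fun i => hsq _
      rw [he, Matrix.diagonal_one]
    have hDinv : D⁻¹ = D := Matrix.inv_eq_right_inv hDD
    have hT : Yᵀ = D * Y * D := by
      ext i j
      rw [Matrix.transpose_apply, Matrix.mul_apply]
      have : ∀ l : Fin n, (D * Y) i l * D l j
          = ((-1 : F) ^ (i : ℕ) * Y i l) * D l j := by
        intro l; rw [hD, Matrix.diagonal_mul]
      simp only [this]
      have hss : ∑ l, ((-1 : F) ^ (i : ℕ) * Y i l) * D l j
          = (-1 : F) ^ (i : ℕ) * Y i j * (-1 : F) ^ (j : ℕ) := by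
        rw [Finset.sum_eq_single j]
        · rw [hD, Matrix.diagonal_apply_eq]
        · intro l _ hl
          rw [hD, Matrix.diagonal_apply_ne _ hl, mul_zero]
        · intro h; exact absurd (Finset.mem_univ _) h
      rw [hss]
      by_cases h1 : (i : ℕ) = n - 1 ∧ (j : ℕ) = n - 1
      · rw [hY j i, hY i j, if_pos ⟨h1.2, h1.1⟩, if_pos h1, h1.1, h1.2, flip]
      · by_cases hsup : (j : ℕ) = (i : ℕ) + 1
        · have h1' : ¬ ((j : ℕ) = n - 1 ∧ (i : ℕ) = n - 1) := by omega
          have h2' : ¬ ((i : ℕ) = (j : ℕ) + 1) := by omega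
          rw [hY j i, hY i j, if_neg h1', if_neg h2', if_pos hsup, if_neg h1,
            if_pos hsup, hsup, pow_succ]
          linear_combination (a ((i : ℕ) + 1)) * hsq (i : ℕ)
        · by_cases hsub : (i : ℕ) = (j : ℕ) + 1
          · have h1' : ¬ ((j : ℕ) = n - 1 ∧ (i : ℕ) = n - 1) := by omega
            rw [hY j i, hY i j, if_neg h1', if_pos hsub, if_neg h1, if_neg hsup,
              if_pos hsub, hsub, pow_succ]
            linear_combination (-(a ((j : ℕ) + 1))) * hsq (j : ℕ)
          · rw [hY j i, hY i j, if_neg (by omega : ¬ ((j : ℕ) = n - 1 ∧ (i : ℕ) = n - 1)),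
              if_neg (by omega : ¬ ((i : ℕ) = (j : ℕ) + 1)),
              if_neg (by omega : ¬ ((j : ℕ) = (i : ℕ) + 1)), if_neg h1,
              if_neg hsup, if_neg hsub, mul_zero, zero_mul]
    have hDα : D *ᵥ α = ((-1 : F) ^ (n - 1)) • α := by
      funext i
      rw [hD, Matrix.mulVec_diagonal, Pi.smul_apply, smul_eq_mul, hα]
      by_cases h : (i : ℕ) = n - 1
      · rw [if_pos h, h]
      · rw [if_neg h, mul_zero, mul_zero]
    have hDx : D *ᵥ x = x := by
      funext i
      rw [hD, Matrix.mulVec_diagonal]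
      rcases Nat.even_or_odd (i : ℕ) with he | ho
      · rw [he.neg_one_pow, one_mul]
      · have := key (i : ℕ) ho i.2
        simp only [Fin.eta] at this
        rw [this, mul_zero]
    have hTinv : (Yᵀ)⁻¹ = D * Y⁻¹ * D := by
      rw [hT, Matrix.mul_inv_rev, Matrix.mul_inv_rev, hDinv, ← mul_assoc]
    have hfin : (Yᵀ)⁻¹ *ᵥ α = ((-1 : F) ^ (n - 1)) • x := by
      rw [hTinv, ← Matrix.mulVec_mulVec, hDα, Matrix.mulVec_smul,
        ← Matrix.mulVec_mulVec, ← hx, hDx]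
    constructor
    · intro hodd
      have : Even (n - 1) := Nat.Odd.sub_odd hodd odd_one
      rw [hfin, this.neg_one_pow, one_smul]
    · intro heven
      have : Odd (n - 1) := Nat.Even.sub_odd hn0 heven odd_one
      rw [hfin, this.neg_one_pow, neg_smul, one_smul, neg_neg]
  · have hdetT : ¬ IsUnit (Yᵀ).det := by rwa [Matrix.det_transpose]
    rw [Matrix.nonsing_inv_apply_not_isUnit _ hdet,
      Matrix.nonsing_inv_apply_not_isUnit _ hdetT]
    constructor <;> intro _ <;> simp
end

section
/- Let Z̃(a_1,...,a_n) be the (n+1)×(n+1) skew-symmetric tridiagonal matrix with superdiagonal entries a_1,...,a_n (and subdiagonal entries -a_i), where all a_i are nonzero elements of a field F. If u is an n×n upper unitriangular matrix over F, ũ = diag(u, 1) is the (n+1)×(n+1) block matrix, and ũ·Z̃(a_1,...,a_n)·ũ^t = Z̃(a_1,...,a_n), then u = I_n. -/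
open Matrix Kronecker

private lemma sum_delta' {N : ℕ} {M : Type*} [AddCommMonoid M] (c : ℕ) (v : Fin N → M) :
    ∑ k : Fin N, (if (k : ℕ) = c then v k else 0) =
      if h : c < N then v ⟨c, h⟩ else 0 := by
  split
  next h =>
    rw [Finset.sum_eq_single (⟨c, h⟩ : Fin N)]
    · simp
    · intro b _ hb
      exact if_neg (fun e => hb (Fin.ext e))
    · simp
  next h =>
    exact Finset.sum_eq_zero fun k _ => if_neg (by have := k.isLt; omega)

/-- If ũ·Z̃·ũᵗ = Z̃ with all a_i nonzero, then u = 1. -/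
theorem stmt_9 (F : Type*) [Field F] (n : ℕ) (a : ℕ → F)
    (ha : ∀ k, 1 ≤ k → k ≤ n → a k ≠ 0)
    (Zt : Matrix (Fin (n + 1)) (Fin (n + 1)) F)
    (hZ : ∀ i j : Fin (n + 1), Zt i j =
      if (j : ℕ) = (i : ℕ) + 1 then a ((i : ℕ) + 1)
      else if (i : ℕ) = (j : ℕ) + 1 then -a ((j : ℕ) + 1) else 0)
    (u : Matrix (Fin n) (Fin n) F)
    (hdiag : ∀ i : Fin n, u i i = 1)
    (hlow : ∀ i j : Fin n, j < i → u i j = 0)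
    (ut : Matrix (Fin (n + 1)) (Fin (n + 1)) F)
    (hu : ∀ i j : Fin (n + 1), ut i j =
      if h : (i : ℕ) < n ∧ (j : ℕ) < n then u ⟨(i : ℕ), h.1⟩ ⟨(j : ℕ), h.2⟩
      else if i = j then 1 else 0)
    (heq : ut * Zt * utᵀ = Zt) : u = 1 := by
  -- lower-triangular part of ut vanishes
  have tri : ∀ i j : Fin (n + 1), (j : ℕ) < (i : ℕ) → ut i j = 0 := by
    intro i j h
    rw [hu]
    split
    next hij => exact hlow _ _ (by simpa using h)
    next => exact if_neg (by intro e; subst e; omega)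
  -- key induction: all columns of ut are standard basis vectors
  have key : ∀ d : ℕ, ∀ m : Fin (n + 1), n ≤ (m : ℕ) + d →
      ∀ i, ut i m = if i = m then 1 else 0 := by
    intro d
    induction d with
    | zero =>
      intro m hm i
      have hmn : (m : ℕ) = n := by omega
      rw [hu, dif_neg (by omega)]
    | succ d ih =>
      intro m hm i
      by_cases hc : n ≤ (m : ℕ) + d
      · exact ih m hc i
      have hmn : (m : ℕ) < n := by omega
      have hjlt : (m : ℕ) + 1 < n + 1 := by omega
      set j : Fin (n + 1) := ⟨(m : ℕ) + 1, hjlt⟩ with hj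
      have hjv : (j : ℕ) = (m : ℕ) + 1 := rfl
      have rowstd : ∀ l : Fin (n + 1), ut j l = if j = l then 1 else 0 := by
        intro l
        by_cases hl : (m : ℕ) < (l : ℕ)
        · exact ih l (by omega) j
        · rw [tri j l (by omega), if_neg (by
            intro e; rw [← e, hjv] at hl; omega)]
      have heq' := congrFun (congrFun heq i) j
      have h1 : (ut * Zt * utᵀ) i j = (ut * Zt) i j := by
        rw [Matrix.mul_apply, Finset.sum_eq_single j]
        · rw [Matrix.transpose_apply, rowstd, if_pos rfl, mul_one]
        · intro b _ hb
          rw [Matrix.transpose_apply, rowstd, if_neg (fun e => hb e.symm), mul_zero]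
        · simp
      have h2 : (ut * Zt) i j = ut i ⟨(m : ℕ), by omega⟩ * a ((m : ℕ) + 1) +
          (if h : (m : ℕ) + 2 < n + 1 then
            ut i ⟨(m : ℕ) + 2, h⟩ * (-(a ((m : ℕ) + 2))) else 0) := by
        rw [Matrix.mul_apply]
        have hterm : ∀ k : Fin (n + 1), ut i k * Zt k j =
            (if (k : ℕ) = (m : ℕ) then ut i k * a ((m : ℕ) + 1) else 0) +
            (if (k : ℕ) = (m : ℕ) + 2 then ut i k * (-(a ((m : ℕ) + 2))) else 0) := by
          intro k
          have h11 : (m : ℕ) + 1 + 1 = (m : ℕ) + 2 := by omega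
          rw [hZ, hjv, h11]
          by_cases hk1 : (k : ℕ) = (m : ℕ)
          · rw [if_pos (by omega : (m : ℕ) + 1 = (k : ℕ) + 1), if_pos hk1,
              if_neg (by omega : ¬(k : ℕ) = (m : ℕ) + 2), add_zero, hk1]
          · by_cases hk2 : (k : ℕ) = (m : ℕ) + 2
            · rw [if_neg (by omega : ¬(m : ℕ) + 1 = (k : ℕ) + 1), if_neg hk1, zero_add]
              simp only [if_pos hk2]
            · rw [if_neg (by omega : ¬(m : ℕ) + 1 = (k : ℕ) + 1), if_neg hk1]
              simp only [if_neg hk2]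
              rw [mul_zero, add_zero]
        rw [Finset.sum_congr rfl (fun k _ => hterm k), Finset.sum_add_distrib,
          sum_delta' (m : ℕ) (fun k => ut i k * a ((m : ℕ) + 1)),
          sum_delta' ((m : ℕ) + 2) (fun k => ut i k * (-(a ((m : ℕ) + 2)))),
          dif_pos (by omega : (m : ℕ) < n + 1)]
      have h3 : Zt i j = (if (i : ℕ) = (m : ℕ) then a ((m : ℕ) + 1) else 0) +
          (if (i : ℕ) = (m : ℕ) + 2 then -(a ((m : ℕ) + 2)) else 0) := by
        have h11 : (m : ℕ) + 1 + 1 = (m : ℕ) + 2 := by omega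
        rw [hZ, hjv, h11]
        by_cases hi1 : (i : ℕ) = (m : ℕ)
        · rw [if_pos (by omega : (m : ℕ) + 1 = (i : ℕ) + 1), if_pos hi1,
            if_neg (by omega : ¬(i : ℕ) = (m : ℕ) + 2), add_zero, hi1]
        · by_cases hi2 : (i : ℕ) = (m : ℕ) + 2
          · rw [if_neg (by omega : ¬(m : ℕ) + 1 = (i : ℕ) + 1), if_neg hi1, zero_add]
          · rw [if_neg (by omega : ¬(m : ℕ) + 1 = (i : ℕ) + 1), if_neg hi1]
            simp only [if_neg hi2]
            rw [add_zero]
      rw [h1, h2, h3] at heq'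
      have ha1 : a ((m : ℕ) + 1) ≠ 0 := ha _ (by omega) (by omega)
      have hmeta : (⟨(m : ℕ), by omega⟩ : Fin (n + 1)) = m := Fin.ext rfl
      rw [hmeta] at heq'
      have hT : (if h : (m : ℕ) + 2 < n + 1 then
            ut i ⟨(m : ℕ) + 2, h⟩ * (-(a ((m : ℕ) + 2))) else 0) =
          (if (i : ℕ) = (m : ℕ) + 2 then -(a ((m : ℕ) + 2)) else 0) := by
        by_cases hlt : (m : ℕ) + 2 < n + 1
        · rw [dif_pos hlt, ih ⟨(m : ℕ) + 2, hlt⟩ (by simp; omega) i]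
          by_cases hi2 : (i : ℕ) = (m : ℕ) + 2
          · rw [if_pos (Fin.ext hi2), if_pos hi2, one_mul]
          · rw [if_neg (fun e => hi2 (by rw [e])), if_neg hi2, zero_mul]
        · rw [dif_neg hlt, if_neg (by have := i.isLt; omega)]
      rw [hT] at heq'
      have heq'' : ut i m * a ((m : ℕ) + 1) =
          (if (i : ℕ) = (m : ℕ) then a ((m : ℕ) + 1) else 0) :=
        add_right_cancel heq'
      by_cases hi1 : (i : ℕ) = (m : ℕ)
      · rw [if_pos hi1] at heq''
        rw [if_pos (Fin.ext hi1)]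
        exact mul_right_cancel₀ ha1 (heq''.trans (one_mul _).symm)
      · rw [if_neg hi1] at heq''
        rw [if_neg (fun e => hi1 (by rw [e]))]
        exact (mul_eq_zero.mp heq'').resolve_right ha1
  -- conclude u = 1
  ext i j
  have hij := key n ⟨(j : ℕ), by omega⟩ (by simp) ⟨(i : ℕ), by omega⟩
  rw [hu, dif_pos ⟨i.isLt, j.isLt⟩] at hij
  simp only [Fin.eta] at hij
  rw [hij, Matrix.one_apply]
  by_cases h : i = j
  · subst h; simp
  · rw [if_neg (by simp [Fin.ext_iff] at *; omega), if_neg h]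
end

section
/- Let a_1,...,a_n and a'_1,...,a'_n be nonzero elements of a field F, and let u be an n×n upper unitriangular matrix with ũ = diag(u,1). If ũ·Z̃(a_1,...,a_n)·ũ^t = Z̃(a'_1,...,a'_n), then a_i = a'_i for all i and u = I_n. In particular, distinct tridiagonal representatives lie in distinct orbits of the unitriangular group acting by u·Z = ũZũ^t on skew-symmetric matrices. -/
open Matrix Kronecker

/-- Distinct tridiagonal representatives lie in distinct unitriangular orbits. -/
theorem stmt_10 (F : Type*) [Field F] (n : ℕ) (a a' : ℕ → F)
    (ha : ∀ k, 1 ≤ k → k ≤ n → a k ≠ 0)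
    (ha' : ∀ k, 1 ≤ k → k ≤ n → a' k ≠ 0)
    (Zt Zt' : Matrix (Fin (n + 1)) (Fin (n + 1)) F)
    (hZ : ∀ i j : Fin (n + 1), Zt i j =
      if (j : ℕ) = (i : ℕ) + 1 then a ((i : ℕ) + 1)
      else if (i : ℕ) = (j : ℕ) + 1 then -a ((j : ℕ) + 1) else 0)
    (hZ' : ∀ i j : Fin (n + 1), Zt' i j =
      if (j : ℕ) = (i : ℕ) + 1 then a' ((i : ℕ) + 1)
      else if (i : ℕ) = (j : ℕ) + 1 then -a' ((j : ℕ) + 1) else 0)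
    (u : Matrix (Fin n) (Fin n) F)
    (hdiag : ∀ i : Fin n, u i i = 1)
    (hlow : ∀ i j : Fin n, j < i → u i j = 0)
    (ut : Matrix (Fin (n + 1)) (Fin (n + 1)) F)
    (hu : ∀ i j : Fin (n + 1), ut i j =
      if h : (i : ℕ) < n ∧ (j : ℕ) < n then u ⟨(i : ℕ), h.1⟩ ⟨(j : ℕ), h.2⟩
      else if i = j then 1 else 0)
    (heq : ut * Zt * utᵀ = Zt') :
    (∀ k, 1 ≤ k → k ≤ n → a k = a' k) ∧ u = 1 := by
  have hut_diag : ∀ i : Fin (n + 1), ut i i = 1 := by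
    intro i
    rw [hu]
    by_cases h : (i : ℕ) < n
    · rw [dif_pos ⟨h, h⟩]; exact hdiag _
    · rw [dif_neg (fun hc => h hc.1), if_pos rfl]
  have hut_low : ∀ i j : Fin (n + 1), (j : ℕ) < (i : ℕ) → ut i j = 0 := by
    intro i j hij
    rw [hu]
    by_cases h : (i : ℕ) < n
    · rw [dif_pos ⟨h, by omega⟩]; exact hlow _ _ hij
    · rw [dif_neg (fun hc => h hc.1), if_neg (by rintro rfl; omega)]
  -- main downward induction
  have key : ∀ d : ℕ, d ≤ n →
      (∀ m : Fin (n + 1), n - d ≤ (m : ℕ) →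
        ∀ i : Fin (n + 1), (i : ℕ) ≠ (m : ℕ) → ut i m = 0) ∧
      (∀ k, n - d < k → k ≤ n → a k = a' k) := by
    intro d
    induction d with
    | zero =>
      intro _
      constructor
      · intro m hm i hi
        have hmn : (m : ℕ) = n := by omega
        rw [hu, dif_neg (by omega), if_neg (by rintro rfl; omega)]
      · intro k hk1 hk2; omega
    | succ d ih =>
      intro hd
      obtain ⟨colIH, aIH⟩ := ih (by omega)
      set m : ℕ := n - (d + 1) with hm
      have hmn : m + 1 ≤ n := by omega
      have hnd : n - d = m + 1 := by omega
      have fm1 : Fin (n + 1) := ⟨m + 1, by omega⟩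
      -- row m+1 of ut is standard
      have hrow : ∀ k : Fin (n + 1), (k : ℕ) ≠ m + 1 →
          ut ⟨m + 1, by omega⟩ k = 0 := by
        intro k hk
        rcases lt_or_gt_of_ne hk with h | h
        · exact hut_low _ _ h
        · exact colIH k (by omega) _ (by simpa using Ne.symm hk)
      -- the key scalar equation
      have hE : ∀ j : Fin (n + 1), (j : ℕ) ≤ m →
          (-(a (m + 1))) * ut j ⟨m, by omega⟩ = Zt' ⟨m + 1, by omega⟩ j := by
        intro j hj
        have h0 : (ut * Zt * utᵀ) ⟨m + 1, by omega⟩ j = Zt' ⟨m + 1, by omega⟩ j := by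
          rw [heq]
        rw [Matrix.mul_apply] at h0
        have hinner : ∀ l : Fin (n + 1),
            (ut * Zt) ⟨m + 1, by omega⟩ l = Zt ⟨m + 1, by omega⟩ l := by
          intro l
          rw [Matrix.mul_apply]
          rw [Finset.sum_eq_single (⟨m + 1, by omega⟩ : Fin (n + 1))]
          · rw [hut_diag, one_mul]
          · intro k _ hk
            rw [hrow k (by simpa [Fin.ext_iff] using hk), zero_mul]
          · intro h; exact absurd (Finset.mem_univ _) h
        simp only [hinner, Matrix.transpose_apply] at h0
        rw [Finset.sum_eq_single (⟨m, by omega⟩ : Fin (n + 1))] at h0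
        · rw [← h0, hZ]
          rw [if_neg (by simp; omega), if_pos (by simp)]
        · intro l _ hl
          have hl' : (l : ℕ) ≠ m := by simpa [Fin.ext_iff] using hl
          by_cases h2 : (l : ℕ) = m + 2
          · have : ut j l = 0 := colIH l (by omega) j (by omega)
            rw [this, mul_zero]
          · rw [hZ, if_neg (by simp; omega), if_neg (by simp; omega), zero_mul]
        · intro h; exact absurd (Finset.mem_univ _) h
      have hanew : a (m + 1) = a' (m + 1) := by
        have := hE ⟨m, by omega⟩ le_rfl
        rw [hut_diag, mul_one, hZ'] at this
        rw [if_neg (by simp; omega), if_pos (by simp)] at this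
        exact neg_injective this
      have hcolnew : ∀ i : Fin (n + 1), (i : ℕ) ≠ m → ut i ⟨m, by omega⟩ = 0 := by
        intro i hi
        rcases lt_or_gt_of_ne hi with h | h
        · have := hE i (by omega)
          rw [hZ', if_neg (by simp; omega), if_neg (by simp; omega)] at this
          have hane : a (m + 1) ≠ 0 := ha (m + 1) (by omega) hmn
          rw [mul_comm, mul_neg, neg_eq_zero] at this
          exact (mul_eq_zero.mp this).resolve_right hane
        · exact hut_low _ _ (by simpa using h)
      refine ⟨?_, ?_⟩
      · intro m' hm' i hi
        rcases eq_or_lt_of_le hm' with h | h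
        · have : m' = (⟨m, by omega⟩ : Fin (n + 1)) := by
            simp [Fin.ext_iff]; omega
          rw [this]; exact hcolnew i (by rw [this] at hi; simpa using hi)
        · exact colIH m' (by omega) i hi
      · intro k hk1 hk2
        rcases eq_or_lt_of_le (Nat.succ_le_of_lt hk1) with h | h
        · have hk : k = m + 1 := by omega
          rw [hk]; exact hanew
        · exact aIH k (by omega) hk2
  obtain ⟨hcol, hA⟩ := key n le_rfl
  constructor
  · intro k hk1 hk2; exact hA k (by omega) hk2
  · ext i j
    rcases lt_trichotomy i j with h | h | h
    · have h0 : ut ⟨(i : ℕ), by omega⟩ ⟨(j : ℕ), by omega⟩ = 0 := by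
        apply hcol ⟨(j : ℕ), by omega⟩ (by simp) _ (by simp; omega)
      rw [hu] at h0
      rw [dif_pos ⟨i.isLt, j.isLt⟩] at h0
      rw [Matrix.one_apply_ne (ne_of_lt h)]
      simpa using h0
    · subst h; rw [hdiag, Matrix.one_apply_eq]
    · rw [hlow _ _ h, Matrix.one_apply_ne h.ne']
end
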